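/- arXiv:1701.01264 — 5 statements merged into one kernel-verified Lean document; each statement's English description precedes it below -/
import Mathlib

section
/- For any nonempty compact convex set X ⊂ ℝ² and any θ, β ∈ [0, 2π], the Feret diameter satisfies H_X(θ + β) ≤ H_X(θ) + 2|sin(β/2)| · H_X(θ + (β + π)/2). -/
open Real Pointwise MeasureTheory

/-- Points of the Euclidean plane. -/
abbrev Pt := EuclideanSpace ℝ (Fin 2)

noncomputable def mk2 (a b : ℝ) : Pt := (WithLp.equiv 2 (Fin 2 → ℝ)).symm ![a, b]

/-- Support function `f_X(x) = sup_{s ∈ X} ⟨x, s⟩`. -/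
noncomputable def fS (X : Set Pt) (x : Pt) : ℝ :=
  sSup ((fun s => (inner ℝ x s : ℝ)) '' X)

/-- Direction vector `(-sin θ, cos θ)`. -/
noncomputable def dir (θ : ℝ) : Pt := mk2 (-Real.sin θ) (Real.cos θ)

/-- Support function in direction θ. -/
noncomputable def hF (X : Set Pt) (θ : ℝ) : ℝ := fS X (dir θ)

/-- The Feret diameter `H_X(θ) = h_X(θ) + h_{-X}(θ)`. -/
noncomputable def feret (X : Set Pt) (θ : ℝ) : ℝ := hF X θ + hF (-X) θ

/-- The segment with endpoints `±½(cos θ, sin θ)`. -/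
noncomputable def seg (θ : ℝ) : Set Pt :=
  segment ℝ (-mk2 (Real.cos θ / 2) (Real.sin θ / 2)) (mk2 (Real.cos θ / 2) (Real.sin θ / 2))

/-!
The Feret diameter is `H_X(θ) = w(u_θ)` for `w(x) = f_X(x) + f_X(-x)` and the unit vector
`u_θ = (-sin θ, cos θ)`. As a sum of support functions, `w` is subadditive, and since it is even it
satisfies `w(c x) ≤ |c| w(x)` for every real `c`. The chord identity
`u_{θ+β} = u_θ + 2 sin(β/2) u_{θ+(β+π)/2}` then gives the inequality at once.
-/

open Bornology

section SupportFunction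

variable {X : Set Pt}

lemma bddAbove_inner_image (hX : IsBounded X) (x : Pt) :
    BddAbove ((fun s => (inner ℝ x s : ℝ)) '' X) :=
  ((innerSL ℝ x).lipschitz.isBounded_image hX).bddAbove

lemma inner_le_fS (hX : IsBounded X) (x : Pt) {s : Pt} (hs : s ∈ X) :
    (inner ℝ x s : ℝ) ≤ fS X x :=
  le_csSup (bddAbove_inner_image hX x) ⟨s, hs, rfl⟩

lemma fS_add_le (hne : X.Nonempty) (hX : IsBounded X) (x y : Pt) :
    fS X (x + y) ≤ fS X x + fS X y :=
  csSup_le (hne.image _) <| by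
    rintro _ ⟨s, hs, rfl⟩
    simpa only [inner_add_left] using add_le_add (inner_le_fS hX x hs) (inner_le_fS hX y hs)

lemma fS_smul_le (hne : X.Nonempty) (hX : IsBounded X) {c : ℝ} (hc : 0 ≤ c) (x : Pt) :
    fS X (c • x) ≤ c * fS X x :=
  csSup_le (hne.image _) <| by
    rintro _ ⟨s, hs, rfl⟩
    simpa only [real_inner_smul_left] using mul_le_mul_of_nonneg_left (inner_le_fS hX x hs) hc

lemma fS_neg_set (x : Pt) : fS (-X) x = fS X (-x) := by
  rw [fS, fS, ← Set.image_neg_eq_neg, Set.image_image]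
  simp only [inner_neg_right, inner_neg_left]

noncomputable def width (X : Set Pt) (x : Pt) : ℝ := fS X x + fS X (-x)

lemma width_neg (x : Pt) : width X (-x) = width X x := by
  rw [width, width, neg_neg, add_comm]

lemma width_add_le (hne : X.Nonempty) (hX : IsBounded X) (x y : Pt) :
    width X (x + y) ≤ width X x + width X y := by
  have h₁ := fS_add_le hne hX x y
  have h₂ := fS_add_le hne hX (-x) (-y)
  rw [width, width, width, neg_add]
  linarith

lemma width_smul_le (hne : X.Nonempty) (hX : IsBounded X) (c : ℝ) (x : Pt) :
    width X (c • x) ≤ |c| * width X x := by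
  wlog hc : 0 ≤ c generalizing c x
  · have h := this (-c) (-x) (by linarith)
    rwa [neg_smul_neg, abs_neg, width_neg] at h
  have h₁ := fS_smul_le hne hX hc x
  have h₂ := fS_smul_le hne hX hc (-x)
  rw [abs_of_nonneg hc, width, width, ← smul_neg]
  linarith

end SupportFunction

lemma feret_eq_width (X : Set Pt) (θ : ℝ) : feret X θ = width X (dir θ) := by
  rw [feret, hF, hF, fS_neg_set, width]

/-- The chord from `dir θ` to `dir (θ + β)` has length `2 |sin (β / 2)|` and is perpendicular to
`dir (θ + β / 2)`. -/
lemma dir_add_eq (θ β : ℝ) :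
    dir (θ + β) = dir θ + (2 * Real.sin (β / 2)) • dir (θ + (β + π) / 2) := by
  obtain ⟨α, rfl⟩ : ∃ α, θ = α - β / 2 := ⟨θ + β / 2, by ring⟩
  rw [show α - β / 2 + β = α + β / 2 by ring, show α - β / 2 + (β + π) / 2 = α + π / 2 by ring]
  ext i
  fin_cases i <;>
    simp only [dir, mk2, WithLp.equiv_symm_apply, PiLp.add_apply, PiLp.smul_apply, smul_eq_mul,
      sin_pi_div_two, cos_pi_div_two, sin_add, cos_add, sin_sub, cos_sub, Fin.isValue,
      Fin.zero_eta, Fin.mk_one, Matrix.cons_val_zero, Matrix.cons_val_one, Matrix.cons_val_fin_one] <;>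
    ring

theorem feret_angle_inequality_general (X : Set Pt)
    (hne : X.Nonempty) (hcomp : IsCompact X)
    (θ β : ℝ) :
    feret X (θ + β) ≤
      feret X θ + 2 * |Real.sin (β / 2)| * feret X (θ + (β + π) / 2) := by
  have habs : 2 * |Real.sin (β / 2)| = |2 * Real.sin (β / 2)| := by
    rw [abs_mul, abs_two]
  simp only [feret_eq_width, dir_add_eq θ β, habs]
  exact (width_add_le hne hcomp.isBounded _ _).trans
    (add_le_add_right (width_smul_le hne hcomp.isBounded _ _) _)

theorem feret_angle_inequality (X : Set Pt)
    (hne : X.Nonempty) (hcomp : IsCompact X) (hconv : Convex ℝ X)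
    (θ β : ℝ) (hθ : θ ∈ Set.Icc 0 (2 * π)) (hβ : β ∈ Set.Icc 0 (2 * π)) :
    feret X (θ + β) ≤
      feret X θ + 2 * |Real.sin (β / 2)| * feret X (θ + (β + π) / 2) :=
  feret_angle_inequality_general X hne hcomp θ β
end

section
/- For N > 1, the N × N matrix F^{(N)} with entries F_{ij} = |sin(θ_i − θ_j)|, where θ_i = (i−1)π/N, is invertible. -/
open Real Pointwise MeasureTheory

/-!
Since `|sin|` has period `π`, `F` is the circulant matrix of `k ↦ sin (kπ/N)` on `Fin N`. Every character `ψ` of a finite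
abelian group is an eigenvector of a circulant matrix, with eigenvalue `∑ₖ v k ψ(-k)`, and the
characters form a basis of `G → ℂ`; so the matrix is invertible once all these eigenvalues are
nonzero. For `G = Fin N` they are `∑ₖ sin (kπ/N) wᵏ` with `wᴺ = 1`. Writing the sine through
`z = exp (iπ/N)`, which satisfies `zᴺ = -1`, both halves are geometric sums, and the eigenvalue
becomes `i (1/(1 - z⁻¹w) - 1/(1 - zw))`, which vanishes only if `z² = 1`.
-/

open Finset Matrix

namespace Matrix

variable {G : Type*} [AddCommGroup G] [Fintype G]

theorem circulant_mulVec_addChar {R : Type*} [CommSemiring R] (v : G → R) (ψ : AddChar G R) :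
    circulant v *ᵥ ψ = (∑ g, v g * ψ (-g)) • ⇑ψ := by
  ext i
  simp only [mulVec, dotProduct, circulant_apply, Pi.smul_apply, smul_eq_mul, Finset.sum_mul]
  refine Fintype.sum_equiv (Equiv.subLeft i) _ _ fun g => ?_
  rw [Equiv.subLeft_apply, neg_sub, mul_assoc, ← AddChar.map_add_eq_mul, sub_add_cancel]

theorem isUnit_circulant_of_addChar_sum_ne_zero [DecidableEq G] (v : G → ℂ)
    (h : ∀ ψ : AddChar G ℂ, ∑ g, v g * ψ (-g) ≠ 0) : IsUnit (circulant v) := by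
  rw [← mulVec_surjective_iff_isUnit, ← Matrix.coe_mulVecLin, ← LinearMap.range_eq_top,
    eq_top_iff, ← (AddChar.complexBasis G).span_eq, Submodule.span_le, AddChar.coe_complexBasis]
  rintro _ ⟨ψ, rfl⟩
  refine ⟨(∑ g, v g * ψ (-g))⁻¹ • ⇑ψ, ?_⟩
  rw [LinearMap.map_smul, Matrix.coe_mulVecLin, circulant_mulVec_addChar, inv_smul_smul₀ (h ψ)]

theorem isUnit_of_isUnit_map {n K L : Type*} [Fintype n] [DecidableEq n] [Field K] [CommRing L]
    [Nontrivial L] (f : K →+* L) {A : Matrix n n K} (h : IsUnit (A.map f)) : IsUnit A := by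
  rw [isUnit_iff_isUnit_det] at h ⊢
  rw [← RingHom.mapMatrix_apply, ← RingHom.map_det] at h
  exact h.of_map

end Matrix

namespace AddChar

variable {G M : Type*} [AddGroup G] [Fintype G] [CommMonoid M]

theorem pow_card_eq_one (ψ : AddChar G M) (g : G) : ψ g ^ Fintype.card G = 1 := by
  rw [← map_nsmul_eq_pow, card_nsmul_eq_zero, map_zero_eq_one]

open Fin.NatCast in
theorem map_neg_fin {N : ℕ} [NeZero N] (ψ : AddChar (Fin N) M) (k : Fin N) :
    ψ (-k) = ψ (-1) ^ (k : ℕ) := by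
  rw [← map_nsmul_eq_pow, neg_nsmul, nsmul_one, Fin.cast_val_eq_self]

end AddChar

section GeomSum

variable {K : Type*} [Field K]

theorem geom_sum_eq_of_pow_eq_neg_one (hK : ringChar K ≠ 2) {u : K} {N : ℕ}
    (hu : u ^ N = -1) : ∑ l ∈ range N, u ^ l = 2 / (1 - u) := by
  have hu1 : u ≠ 1 := by
    rintro rfl
    exact hK (neg_one_eq_one_iff.mp (hu ▸ one_pow N))
  rw [geom_sum_eq hu1, hu, ← neg_div_neg_eq, neg_sub]
  ring_nf

theorem sum_inv_pow_sub_pow_mul_pow_ne_zero (hK : ringChar K ≠ 2) {N : ℕ}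
    {z w : K} (hz : z ^ N = -1) (hz2 : z ^ 2 ≠ 1) (hw : w ^ N = 1) :
    ∑ l ∈ range N, (z⁻¹ ^ l - z ^ l) * w ^ l ≠ 0 := by
  have hN : N ≠ 0 := by
    rintro rfl
    exact hK (neg_one_eq_one_iff.mp (hz ▸ pow_zero z))
  have hz0 : z ≠ 0 := ne_zero_pow hN (by simp [hz])
  have hw0 : w ≠ 0 := ne_zero_pow hN (by simp [hw])
  have hsum : ∑ l ∈ range N, (z⁻¹ ^ l - z ^ l) * w ^ l
      = 2 / (1 - z⁻¹ * w) - 2 / (1 - z * w) := by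
    simp only [sub_mul, ← mul_pow, sum_sub_distrib]
    rw [geom_sum_eq_of_pow_eq_neg_one hK, geom_sum_eq_of_pow_eq_neg_one hK] <;>
      simp [mul_pow, hz, hw]
  rw [hsum, sub_ne_zero, div_eq_mul_inv, div_eq_mul_inv, ne_eq,
    mul_right_inj' (Ring.two_ne_zero hK), _root_.inv_inj, sub_right_inj, mul_left_inj' hw0]
  intro hinv
  apply hz2
  rw [sq]
  nth_rw 1 [← hinv]
  exact inv_mul_cancel₀ hz0

end GeomSum

theorem sum_sin_mul_pow_ne_zero {N : ℕ} (hN : 1 < N) {w : ℂ} (hw : w ^ N = 1) :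
    ∑ l ∈ range N, (sin (l * π / N) : ℂ) * w ^ l ≠ 0 := by
  set z := Complex.exp (π * Complex.I / N)
  have hN0 : (N : ℂ) ≠ 0 := Nat.cast_ne_zero.mpr (by omega)
  have hsin : ∀ l : ℕ, (sin (l * π / N) : ℂ) = Complex.I / 2 * (z⁻¹ ^ l - z ^ l) := by
    intro l
    rw [Complex.ofReal_sin, Complex.sin, ← Complex.exp_neg, ← Complex.exp_nat_mul,
      ← Complex.exp_nat_mul]
    push_cast
    ring_nf
  have hz : z ^ N = -1 := by
    rw [← Complex.exp_nat_mul, mul_div_cancel₀ _ hN0, Complex.exp_pi_mul_I]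
  have hz2 : z ^ 2 ≠ 1 := by
    have hz_sq : z ^ 2 = Complex.exp (2 * π * Complex.I / N) := by
      rw [← Complex.exp_nat_mul]
      ring_nf
    simpa [hz_sq] using
      (Complex.isPrimitiveRoot_exp N (by omega)).pow_ne_one_of_pos_of_lt one_ne_zero hN
  simp_rw [hsin, mul_assoc, ← mul_sum]
  exact mul_ne_zero (by simp)
    (sum_inv_pow_sub_pow_mul_pow_ne_zero (by simp [ringChar.eq_zero]) hz hz2 hw)

theorem abs_sin_eq_sin_of_eq_add_int_mul_pi {x y : ℝ} (k : ℤ) (h : y = x + k * π) (hy0 : 0 ≤ y)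
    (hyπ : y ≤ π) : |sin x| = sin y := by
  rw [← abs_of_nonneg (sin_nonneg_of_nonneg_of_le_pi hy0 hyπ), h, sin_add_int_mul_pi, abs_mul,
    abs_neg_one_zpow, one_mul]

theorem abs_sin_sub_eq_sin_fin_sub {N : ℕ} (i j : Fin N) :
    |sin (i * π / N - j * π / N)| = sin (((i - j : Fin N) : ℕ) * π / N) := by
  have hN : (0 : ℝ) < N := Nat.cast_pos.mpr i.pos
  have hlt : (((i - j : Fin N) : ℕ) : ℝ) < N := by exact_mod_cast (i - j).isLt
  refine abs_sin_eq_sin_of_eq_add_int_mul_pi (if j ≤ i then 0 else 1) ?_ (by positivity) ?_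
  · split_ifs with hji
    · rw [Fin.coe_sub_iff_le.mpr hji, Nat.cast_sub hji]
      ring
    · rw [Fin.coe_sub_iff_lt.mpr (not_le.mp hji), Nat.cast_sub (by omega)]
      push_cast
      field_simp
      ring
  · rw [div_le_iff₀ hN]
    nlinarith [pi_pos]

theorem matrixF_invertible (N : ℕ) (hN : 1 < N) :
    IsUnit (Matrix.of fun i j : Fin N =>
      |Real.sin ((i : ℝ) * π / N - (j : ℝ) * π / N)|) := by
  have : NeZero N := ⟨by omega⟩
  have hcirc : (Matrix.of fun i j : Fin N => |Real.sin ((i : ℝ) * π / N - (j : ℝ) * π / N)|)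
      = circulant fun k : Fin N => sin ((k : ℕ) * π / N) :=
    Matrix.ext abs_sin_sub_eq_sin_fin_sub
  rw [hcirc]
  refine isUnit_of_isUnit_map Complex.ofRealHom ?_
  rw [map_circulant]
  refine isUnit_circulant_of_addChar_sum_ne_zero _ fun ψ => ?_
  simp only [Complex.ofRealHom_eq_coe]
  rw [Finset.sum_congr rfl fun k _ => by rw [ψ.map_neg_fin],
    Fin.sum_univ_eq_sum_range (fun l => (sin (l * π / N) : ℂ) * ψ (-1) ^ l)]
  exact sum_sin_mul_pow_ne_zero hN (by simpa using ψ.pow_card_eq_one (-1))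
end

section
/- Let N ≥ 2, X ⊂ ℝ² a nonempty compact convex centrally symmetric set (X = −X), θ_i = (i−1)π/N, and X_0^{(N)} the zonotope in C_0^{(N)} whose Feret diameter agrees with that of X at all θ_i. Then diam(X_0^{(N)}) ≤ (√2/(√2 − 1)) · diam(X), where diam(Y) = sup_θ H_Y(θ). -/
/-!
The Feret diameter is additive under Minkowski sums and that of `α • S_θ` is `α |sin (θ - φ)|`,
so `H_{X₀}(φ) = ∑ α_i |sin (θ_i - φ)|`. Every node `θ_i` has a node `θ_j` at angular distance
in `[π/4, π/2]`, whence `α_i √2/2 ≤ H_{X₀}(θ_j) = H_X(θ_j) ≤ D := diam X`. For arbitrary `φ`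
take the node `θ_j` within `π/(2N)` of `φ`; subadditivity of `|sin|` gives
`H_{X₀}(φ) ≤ H_{X₀}(θ_j) + (∑ α_i) |sin (θ_j - φ)| ≤ D + N √2 D π/(2N) = (1 + √2 π/2) D`,
and `1 + √2 π/2 ≤ 2 + √2 = √2/(√2 - 1)`.
-/

open Real Pointwise MeasureTheory

lemma IsLUB.finsetSum {G ι : Type*} [AddCommGroup G] [Preorder G] [AddLeftMono G]
    {s : Finset ι} {A : ι → Set G} {a : ι → G} (h : ∀ i ∈ s, IsLUB (A i) (a i)) :
    IsLUB (∑ i ∈ s, A i) (∑ i ∈ s, a i) := by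
  classical
  induction s using Finset.induction_on with
  | empty => exact isLUB_singleton
  | insert i s hi ih =>
    rw [Finset.sum_insert hi, Finset.sum_insert hi]
    exact (h i (Finset.mem_insert_self i s)).add (ih fun j hj => h j (Finset.mem_insert_of_mem hj))

lemma inner_dir_mk2 (φ a b : ℝ) : inner ℝ (dir φ) (mk2 a b) = -sin φ * a + cos φ * b := by
  simp [dir, mk2, PiLp.inner_apply, Fin.sum_univ_two, mul_comm]

lemma norm_dir (φ : ℝ) : ‖dir φ‖ = 1 := by
  simp [EuclideanSpace.norm_eq, dir, mk2, Fin.sum_univ_two]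

lemma fS_neg (X : Set Pt) (u : Pt) : fS (-X) u = fS X (-u) := by
  simp only [fS, ← Set.image_neg_eq_neg, Set.image_image, inner_neg_right, inner_neg_left]

lemma isLUB_image_inner_seg (u : Pt) (θ : ℝ) :
    IsLUB ((fun s => inner ℝ u s) '' seg θ) |inner ℝ u (mk2 (cos θ / 2) (sin θ / 2))| := by
  set e := mk2 (cos θ / 2) (sin θ / 2)
  have himage : (fun s => inner ℝ u s) '' seg θ = segment ℝ (-inner ℝ u e) (inner ℝ u e) := by
    simpa [seg] using image_segment ℝ (innerSL ℝ u).toLinearMap.toAffineMap (-e) e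
  rw [himage, segment_eq_uIcc, Set.uIcc, abs_eq_max_neg, max_comm _ (-_)]
  exact isLUB_Icc min_le_max

lemma isLUB_image_inner_zonotope (u : Pt) {ι : Type*} (s : Finset ι) (α θ : ι → ℝ)
    (hα : ∀ i ∈ s, 0 ≤ α i) :
    IsLUB ((fun x => inner ℝ u x) '' ∑ i ∈ s, α i • seg (θ i))
      (∑ i ∈ s, α i * |inner ℝ u (mk2 (cos (θ i) / 2) (sin (θ i) / 2))|) := by
  rw [show (fun x => inner ℝ u x) = ⇑(innerSL ℝ u) from rfl, Set.image_finsetSum]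
  refine IsLUB.finsetSum fun i hi => ?_
  rw [image_smul_set, ← Set.image_smul]
  exact (isLUB_image_inner_seg u (θ i)).mul_left (hα i hi)

lemma feret_zonotope {ι : Type*} (s : Finset ι) (α θ : ι → ℝ) (hα : ∀ i ∈ s, 0 ≤ α i) (φ : ℝ) :
    feret (∑ i ∈ s, α i • seg (θ i)) φ = ∑ i ∈ s, α i * |sin (θ i - φ)| := by
  have hsup (u : Pt) := (isLUB_image_inner_zonotope u s α θ hα).csSup_eq
    (isLUB_image_inner_zonotope u s α θ hα).nonempty
  rw [feret, hF, hF, fS_neg, fS, fS, hsup, hsup, ← Finset.sum_add_distrib]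
  refine Finset.sum_congr rfl fun i _ => ?_
  have hinner : inner ℝ (dir φ) (mk2 (cos (θ i) / 2) (sin (θ i) / 2)) = sin (θ i - φ) / 2 := by
    rw [inner_dir_mk2, sin_sub]; ring
  rw [inner_neg_left, abs_neg, hinner, abs_div, abs_two]
  ring

lemma fS_le_of_forall_norm_le {X : Set Pt} {R : ℝ} (hR : 0 ≤ R) (hX : ∀ x ∈ X, ‖x‖ ≤ R)
    (u : Pt) : fS X u ≤ R * ‖u‖ := by
  refine Real.sSup_le ?_ (by positivity)
  rintro _ ⟨x, hx, rfl⟩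
  calc inner ℝ u x ≤ ‖u‖ * ‖x‖ := real_inner_le_norm u x
    _ ≤ R * ‖u‖ := by rw [mul_comm]; gcongr; exact hX x hx

lemma bddAbove_range_feret {X : Set Pt} (hX : Bornology.IsBounded X) :
    BddAbove (Set.range (feret X)) := by
  obtain ⟨R, hR, hXR⟩ := hX.exists_pos_norm_le
  have hnegR : ∀ x ∈ -X, ‖x‖ ≤ R := fun x hx => norm_neg x ▸ hXR (-x) hx
  refine ⟨R + R, ?_⟩
  rintro _ ⟨θ, rfl⟩
  have h₁ := fS_le_of_forall_norm_le hR.le hXR (dir θ)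
  have h₂ := fS_le_of_forall_norm_le hR.le hnegR (dir θ)
  rw [norm_dir, mul_one] at h₁ h₂
  exact add_le_add h₁ h₂

lemma abs_sin_add_le (x y : ℝ) : |sin (x + y)| ≤ |sin x| + |sin y| := by
  rw [sin_add]
  calc |sin x * cos y + cos x * sin y| ≤ |sin x| * |cos y| + |cos x| * |sin y| := by
        simpa only [abs_mul] using abs_add_le (sin x * cos y) (cos x * sin y)
    _ ≤ |sin x| * 1 + 1 * |sin y| := by gcongr <;> exact abs_cos_le_one _
    _ = |sin x| + |sin y| := by ring

lemma abs_sin_add_int_mul_pi (x : ℝ) (n : ℤ) : |sin (x + n * π)| = |sin x| := by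
  rw [sin_add_int_mul_pi, abs_mul, abs_zpow, abs_neg, abs_one, one_zpow, one_mul]

lemma exists_fin_abs_sin_eq {N : ℕ} (hN : N ≠ 0) (k : ℤ) (φ : ℝ) :
    ∃ j : Fin N, |sin ((j : ℝ) * π / N - φ)| = |sin ((k : ℝ) * π / N - φ)| := by
  have hNz : (N : ℤ) ≠ 0 := by exact_mod_cast hN
  have hmod_nonneg : 0 ≤ k % N := Int.emod_nonneg k hNz
  have hmod_lt : k % N < N := Int.emod_lt_of_pos k (by omega)
  refine ⟨⟨(k % N).toNat, by omega⟩, ?_⟩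
  have hcast : (((k % N).toNat : ℕ) : ℝ) = (k : ℝ) - N * ((k / N : ℤ) : ℝ) := by
    rw [← Int.cast_natCast, Int.toNat_of_nonneg hmod_nonneg, Int.emod_def]; push_cast; ring
  have hangle : (((k % N).toNat : ℕ) : ℝ) * π / N - φ
      = ((k : ℝ) * π / N - φ) + ((-(k / N) : ℤ) : ℝ) * π := by
    rw [hcast]; push_cast; field_simp; ring
  rw [Fin.val_mk, hangle, abs_sin_add_int_mul_pi]

lemma exists_abs_sin_sub_le {N : ℕ} (hN : N ≠ 0) (φ : ℝ) :
    ∃ j : Fin N, |sin ((j : ℝ) * π / N - φ)| ≤ π / (2 * N) := by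
  have hNpos : (0 : ℝ) < N := by positivity
  obtain ⟨j, hj⟩ := exists_fin_abs_sin_eq hN (round (φ * N / π)) φ
  refine ⟨j, hj ▸ abs_sin_le_abs.trans ?_⟩
  set k := round (φ * N / π)
  calc |(k : ℝ) * π / N - φ| = |(k - φ * N / π) * (π / N)| := by congr 1; field_simp
    _ = |φ * N / π - k| * (π / N) := by
        rw [abs_mul, abs_sub_comm, abs_of_pos (a := π / N) (by positivity)]
    _ ≤ 1 / 2 * (π / N) := by gcongr; exact abs_sub_round _
    _ = π / (2 * N) := by ring

lemma sqrt_two_div_two_le_sin {x : ℝ} (h₁ : π / 4 ≤ x) (h₂ : x ≤ π / 2) : √2 / 2 ≤ sin x :=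
  sin_pi_div_four ▸ sin_le_sin_of_le_of_le_pi_div_two (by linarith [pi_pos]) h₂ h₁

lemma exists_abs_sin_sub_ge {N : ℕ} (hN : 2 ≤ N) (i : Fin N) :
    ∃ j : Fin N, √2 / 2 ≤ |sin ((i : ℝ) * π / N - (j : ℝ) * π / N)| := by
  have hNpos : (0 : ℝ) < N := by positivity
  obtain ⟨j, hj⟩ :=
    exists_fin_abs_sin_eq (N := N) (by omega) ((i : ℤ) + (N / 2 : ℕ)) ((i : ℝ) * π / N)
  refine ⟨j, ?_⟩
  have hangle : ((((i : ℤ) + (N / 2 : ℕ) : ℤ) : ℝ)) * π / N - (i : ℝ) * π / N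
      = ((N / 2 : ℕ) : ℝ) * π / N := by simp only [Int.cast_add, Int.cast_natCast]; ring
  have hhalf₁ : (N : ℝ) ≤ 4 * ((N / 2 : ℕ) : ℝ) := by exact_mod_cast (by omega : N ≤ 4 * (N / 2))
  have hhalf₂ : 2 * ((N / 2 : ℕ) : ℝ) ≤ N := by exact_mod_cast (by omega : 2 * (N / 2) ≤ N)
  rw [← neg_sub, sin_neg, abs_neg, hj, hangle]
  refine (sqrt_two_div_two_le_sin ?_ ?_).trans (le_abs_self _)
  · rw [div_le_div_iff₀ (by norm_num) hNpos]; nlinarith [pi_pos]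
  · rw [div_le_div_iff₀ hNpos (by norm_num)]; nlinarith [pi_pos]

lemma sum_mul_abs_sin_sub_le_add {ι : Type*} (s : Finset ι) {α : ι → ℝ} (hα : ∀ i ∈ s, 0 ≤ α i)
    (θ : ι → ℝ) (φ ψ : ℝ) :
    ∑ i ∈ s, α i * |sin (θ i - φ)|
      ≤ ∑ i ∈ s, α i * |sin (θ i - ψ)| + (∑ i ∈ s, α i) * |sin (ψ - φ)| := by
  rw [Finset.sum_mul, ← Finset.sum_add_distrib]
  refine Finset.sum_le_sum fun i hi => ?_
  rw [← mul_add]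
  refine mul_le_mul_of_nonneg_left ?_ (hα i hi)
  simpa only [sub_add_sub_cancel] using abs_sin_add_le (θ i - ψ) (ψ - φ)

section Nodes

variable {N : ℕ} {α : Fin N → ℝ} {D : ℝ}

lemma le_sqrt_two_mul_of_forall_node_le (hN : 2 ≤ N) (hα : ∀ i, 0 ≤ α i)
    (hD : ∀ j : Fin N, ∑ i, α i * |sin ((i : ℝ) * π / N - (j : ℝ) * π / N)| ≤ D) (i : Fin N) :
    α i ≤ √2 * D := by
  obtain ⟨j, hj⟩ := exists_abs_sin_sub_ge hN i
  have hαi : α i * (√2 / 2) ≤ D :=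
    calc α i * (√2 / 2) ≤ α i * |sin ((i : ℝ) * π / N - (j : ℝ) * π / N)| :=
          mul_le_mul_of_nonneg_left hj (hα i)
      _ ≤ ∑ k, α k * |sin ((k : ℝ) * π / N - (j : ℝ) * π / N)| :=
          Finset.single_le_sum
            (f := fun k : Fin N => α k * |sin ((k : ℝ) * π / N - (j : ℝ) * π / N)|)
            (fun k _ => mul_nonneg (hα k) (abs_nonneg _)) (Finset.mem_univ i)
      _ ≤ D := hD j
  calc α i = √2 * (α i * (√2 / 2)) := by
        rw [mul_left_comm, ← mul_div_assoc, Real.mul_self_sqrt zero_le_two]; ring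
    _ ≤ √2 * D := by gcongr

lemma one_add_sqrt_two_mul_pi_div_two_le : 1 + √2 * π / 2 ≤ √2 / (√2 - 1) := by
  have hsq : √2 * √2 = 2 := Real.mul_self_sqrt zero_le_two
  have h14 : 1.4 ≤ √2 := by nlinarith [Real.sqrt_nonneg 2]
  have h15 : √2 ≤ 1.5 := by nlinarith [Real.sqrt_nonneg 2]
  have hsub : 0 < √2 - 1 := by linarith
  have hconst : √2 / (√2 - 1) = 2 + √2 := by
    rw [div_eq_iff hsub.ne']; linear_combination -hsq
  rw [hconst]
  nlinarith [pi_lt_d2, pi_gt_three]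

lemma sum_mul_abs_sin_sub_le_of_forall_node_le (hN : 2 ≤ N) (hα : ∀ i, 0 ≤ α i)
    (hD : ∀ j : Fin N, ∑ i, α i * |sin ((i : ℝ) * π / N - (j : ℝ) * π / N)| ≤ D) (φ : ℝ) :
    ∑ i, α i * |sin ((i : ℝ) * π / N - φ)| ≤ √2 / (√2 - 1) * D := by
  have hNpos : (0 : ℝ) < N := by positivity
  have hD₀ : 0 ≤ D := (Finset.sum_nonneg fun i _ => mul_nonneg (hα i) (abs_nonneg _)).trans
    (hD ⟨0, by omega⟩)
  have hsum : ∑ i, α i ≤ N * (√2 * D) :=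
    calc ∑ i, α i ≤ ∑ _i : Fin N, √2 * D :=
          Finset.sum_le_sum fun i _ => le_sqrt_two_mul_of_forall_node_le hN hα hD i
      _ = N * (√2 * D) := by simp
  obtain ⟨j, hj⟩ := exists_abs_sin_sub_le (N := N) (by omega) φ
  calc ∑ i, α i * |sin ((i : ℝ) * π / N - φ)|
      ≤ ∑ i, α i * |sin ((i : ℝ) * π / N - (j : ℝ) * π / N)|
        + (∑ i, α i) * |sin ((j : ℝ) * π / N - φ)| :=
        sum_mul_abs_sin_sub_le_add _ (fun i _ => hα i) _ _ _
    _ ≤ D + N * (√2 * D) * (π / (2 * N)) := by gcongr; exact hD j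
    _ = (1 + √2 * π / 2) * D := by field_simp
    _ ≤ √2 / (√2 - 1) * D := by gcongr; exact one_add_sqrt_two_mul_pi_div_two_le

end Nodes

theorem diam_approx0_le_general (N : ℕ) (hN : 2 ≤ N) (X : Set Pt)
    (hcomp : IsCompact X)
    (α : Fin N → ℝ) (hα : ∀ i, 0 ≤ α i) (X0 : Set Pt)
    (hX0 : X0 = ∑ i : Fin N, α i • seg ((i : ℝ) * π / N))
    (hferet : ∀ i : Fin N, feret X0 ((i : ℝ) * π / N) = feret X ((i : ℝ) * π / N)) :
    (⨆ θ : ℝ, feret X0 θ) ≤ (Real.sqrt 2 / (Real.sqrt 2 - 1)) * ⨆ θ : ℝ, feret X θ := by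
  have hX0_feret (φ : ℝ) : feret X0 φ = ∑ i, α i * |sin ((i : ℝ) * π / N - φ)| := by
    rw [hX0, feret_zonotope _ _ _ fun i _ => hα i]
  have hnodes (j : Fin N) :
      ∑ i, α i * |sin ((i : ℝ) * π / N - (j : ℝ) * π / N)| ≤ ⨆ θ : ℝ, feret X θ := by
    rw [← hX0_feret, hferet]
    exact le_ciSup (bddAbove_range_feret hcomp.isBounded) _
  refine ciSup_le fun φ => ?_
  rw [hX0_feret]
  exact sum_mul_abs_sin_sub_le_of_forall_node_le hN hα hnodes φ

theorem diam_approx0_le (N : ℕ) (hN : 2 ≤ N) (X : Set Pt)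
    (hne : X.Nonempty) (hcomp : IsCompact X) (hconv : Convex ℝ X) (hsym : X = -X)
    (α : Fin N → ℝ) (hα : ∀ i, 0 ≤ α i) (X0 : Set Pt)
    (hX0 : X0 = ∑ i : Fin N, α i • seg ((i : ℝ) * π / N))
    (hferet : ∀ i : Fin N, feret X0 ((i : ℝ) * π / N) = feret X ((i : ℝ) * π / N)) :
    (⨆ θ : ℝ, feret X0 θ) ≤ (Real.sqrt 2 / (Real.sqrt 2 - 1)) * ⨆ θ : ℝ, feret X θ :=
  diam_approx0_le_general N hN X hcomp α hα X0 hX0 hferet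
end

section
/- The function k_S(t) = (1/π) ∫_0^π |sin(t + z) sin(z)| dz is π-periodic and for t ∈ [0, π] equals k_S(t) = (1/(2π)) (2 sin³(t) + cos(t)(π − 2t + sin(2t))). -/
open Real Pointwise MeasureTheory

/-- `k_S(t) = (1/π) ∫₀^π |sin(t+z) sin z| dz`. -/
noncomputable def kS (t : ℝ) : ℝ :=
  (1 / π) * ∫ z in (0:ℝ)..π, |Real.sin (t + z) * Real.sin z|

/-!
For `t ∈ [0, π]` the integrand `sin (t + z) sin z` is nonnegative for `z ∈ [0, π - t]` and
nonpositive for `z ∈ [π - t, π]`, so the absolute value splits into two ordinary integrals.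
By the product-to-sum formula `sin (t + z) sin z = (cos t - cos (t + 2z)) / 2`, an antiderivative
is `z cos t / 2 - sin (t + 2z) / 4`, and evaluating it gives `π kS t = sin t + (π/2 - t) cos t`.
-/

theorem intervalIntegral.integral_abs_eq_sub_of_nonneg_of_nonpos {f : ℝ → ℝ} {a b c : ℝ}
    (hf : IntervalIntegrable f volume a b) (hac : a ≤ c) (hcb : c ≤ b)
    (hpos : ∀ x ∈ Set.Icc a c, 0 ≤ f x) (hneg : ∀ x ∈ Set.Icc c b, f x ≤ 0) :
    ∫ x in a..b, |f x| = (∫ x in a..c, f x) - ∫ x in c..b, f x := by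
  have hc : c ∈ Set.uIcc a b := Set.mem_uIcc_of_le hac hcb
  have h₁ : ∫ x in a..c, |f x| = ∫ x in a..c, f x := by
    refine intervalIntegral.integral_congr fun x hx => abs_of_nonneg (hpos x ?_)
    rwa [Set.uIcc_of_le hac] at hx
  have h₂ : ∫ x in c..b, |f x| = ∫ x in c..b, -f x := by
    refine intervalIntegral.integral_congr fun x hx => abs_of_nonpos (hneg x ?_)
    rwa [Set.uIcc_of_le hcb] at hx
  rw [← intervalIntegral.integral_add_adjacent_intervals
    (hf.mono_set (Set.uIcc_subset_uIcc_left hc)).abs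
    (hf.mono_set (Set.uIcc_subset_uIcc_right hc)).abs,
    h₁, h₂, intervalIntegral.integral_neg, sub_eq_add_neg]

theorem hasDerivAt_sin_add_mul_sin_antideriv (t z : ℝ) :
    HasDerivAt (fun z => z * cos t / 2 - sin (t + 2 * z) / 4) (sin (t + z) * sin z) z := by
  have hlin : HasDerivAt (fun z : ℝ => t + 2 * z) 2 z := by
    simpa using ((hasDerivAt_id z).const_mul 2).const_add t
  have h := (((hasDerivAt_id z).mul_const (cos t)).div_const 2).sub
    (((hasDerivAt_sin _).comp z hlin).div_const 4)
  refine h.congr_deriv ?_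
  have hcos : cos (t + 2 * z) = cos ((t + z) + z) := by ring_nf
  have hcos' : cos t = cos ((t + z) - z) := by ring_nf
  rw [hcos, hcos', cos_add, cos_sub]
  ring

theorem integral_sin_add_mul_sin (t a b : ℝ) :
    ∫ z in a..b, sin (t + z) * sin z =
      (b * cos t / 2 - sin (t + 2 * b) / 4) - (a * cos t / 2 - sin (t + 2 * a) / 4) :=
  intervalIntegral.integral_eq_sub_of_hasDerivAt
    (fun z _ => hasDerivAt_sin_add_mul_sin_antideriv t z)
    ((by fun_prop : Continuous fun z => sin (t + z) * sin z).intervalIntegrable _ _)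

theorem integral_abs_sin_add_mul_sin {t : ℝ} (ht : t ∈ Set.Icc 0 π) :
    ∫ z in (0:ℝ)..π, |sin (t + z) * sin z| = sin t + (π / 2 - t) * cos t := by
  obtain ⟨ht₀, htπ⟩ := ht
  have hpos : ∀ z ∈ Set.Icc 0 (π - t), 0 ≤ sin (t + z) * sin z := fun z ⟨hz₀, hz⟩ =>
    mul_nonneg (sin_nonneg_of_nonneg_of_le_pi (by linarith) (by linarith))
      (sin_nonneg_of_nonneg_of_le_pi hz₀ (by linarith))
  have hneg : ∀ z ∈ Set.Icc (π - t) π, sin (t + z) * sin z ≤ 0 := by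
    rintro z ⟨hz, hzπ⟩
    have hsin : sin (t + z) ≤ 0 := by
      rw [← sin_sub_two_pi]
      exact sin_nonpos_of_nonpos_of_neg_pi_le (by linarith) (by linarith)
    exact mul_nonpos_of_nonpos_of_nonneg hsin (sin_nonneg_of_nonneg_of_le_pi (by linarith) hzπ)
  have hsplit := intervalIntegral.integral_abs_eq_sub_of_nonneg_of_nonpos
    ((by fun_prop : Continuous fun z => sin (t + z) * sin z).intervalIntegrable 0 π)
    (sub_nonneg.2 htπ) (sub_le_self π ht₀) hpos hneg
  have hmid : sin (t + 2 * (π - t)) = -sin t := by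
    rw [show t + 2 * (π - t) = 2 * π - t by ring, sin_two_pi_sub]
  rw [hsplit, integral_sin_add_mul_sin, integral_sin_add_mul_sin, hmid, sin_add_two_pi]
  ring_nf

theorem kS_add_pi (t : ℝ) : kS (t + π) = kS t := by
  unfold kS
  congr 1
  refine intervalIntegral.integral_congr fun z _ => ?_
  simp only [show t + π + z = t + z + π by ring, sin_add_pi, neg_mul, abs_neg]

theorem kS_periodic_and_formula :
    (∀ t : ℝ, kS (t + π) = kS t) ∧
    (∀ t ∈ Set.Icc (0:ℝ) π,
      kS t = (1 / (2 * π)) *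
        (2 * Real.sin t ^ 3 + Real.cos t * (π - 2 * t + Real.sin (2 * t)))) := by
  refine ⟨kS_add_pi, fun t ht => ?_⟩
  rw [kS, integral_abs_sin_add_mul_sin ht, sin_two_mul]
  have hpyth := sin_sq_add_cos_sq t
  field_simp
  linear_combination (-2 * sin t) * hpyth
end

section
/- For N > 1 and θ_i = (i−1)π/N, the N × N matrix K(0) with entries K_{ij} = k_S(θ_i − θ_j), where k_S(t) = (1/π)∫_0^π |sin(t+z) sin(z)| dz, is symmetric positive definite. -/
open Real Pointwise MeasureTheory

/-! The quadratic form of `K(0)` is `(1/π) ∫₀^π (∑ᵢ xᵢ |sin (z - θᵢ)|)² dz`, so `K(0)` is a positive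
multiple of the Gram matrix of the functions `|sin (· - θᵢ)|` on `[0, π]` and it suffices that these
are linearly independent there. By `π`-periodicity a combination vanishing on `[0, π]` vanishes on
all of `ℝ`; but `|sin (· - θⱼ)|` has a kink at `θⱼ`, where all the others are differentiable because
the `θᵢ` are distinct modulo `π`, so the coefficient of `|sin (· - θⱼ)|` must be zero. -/

open Set Function Matrix

theorem linearIndependent_of_not_differentiableAt {𝕜 E F ι : Type*} [NontriviallyNormedField 𝕜]
    [NormedAddCommGroup E] [NormedSpace 𝕜 E] [NormedAddCommGroup F] [NormedSpace 𝕜 F]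
    [Fintype ι] {f : ι → E → F} (p : ι → E)
    (hdiff : ∀ i j, i ≠ j → DifferentiableAt 𝕜 (f i) (p j))
    (hkink : ∀ j, ¬ DifferentiableAt 𝕜 (f j) (p j)) : LinearIndependent 𝕜 f := by
  classical
  refine Fintype.linearIndependent_iff.2 fun c hc j => by_contra fun hcj => hkink j ?_
  rw [← Finset.add_sum_erase _ _ (Finset.mem_univ j)] at hc
  have hfj : f j = -(c j)⁻¹ • ∑ i ∈ Finset.univ.erase j, c i • f i := by
    rw [neg_smul, ← smul_neg, neg_eq_of_add_eq_zero_left hc, inv_smul_smul₀ hcj]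
  rw [hfj]
  exact (DifferentiableAt.sum fun i hi =>
    (hdiff i j (Finset.ne_of_mem_erase hi)).const_smul (c i)).const_smul _

theorem linearIndependent_domRestrict_Icc_of_periodic {ι : Type*} [Fintype ι] {f : ι → ℝ → ℝ}
    {T : ℝ} (hT : 0 < T) (hper : ∀ i, Periodic (f i) T) (hf : LinearIndependent ℝ f) (a : ℝ) :
    LinearIndependent ℝ fun i => (Icc a (a + T)).domRestrict (f i) := by
  refine Fintype.linearIndependent_iff.2 fun c hc => Fintype.linearIndependent_iff.1 hf c ?_
  have hper_sum : Periodic (∑ i, c i • f i) T := fun z => by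
    simp only [Finset.sum_apply, Pi.smul_apply, hper _ z]
  funext z
  obtain ⟨y, hy, hzy⟩ := hper_sum.exists_mem_Ico hT z a
  simpa [hzy, domRestrict_apply] using congr_fun hc ⟨y, Ico_subset_Icc_self hy⟩

theorem abs_sin_sub_periodic (c : ℝ) : Periodic (fun z => |sin (z - c)|) π := fun z => by
  simp only [show z + π - c = z - c + π by ring, sin_add_pi, abs_neg]

theorem differentiableAt_abs_sin_sub {c p : ℝ} (h : sin (p - c) ≠ 0) :
    DifferentiableAt ℝ (fun z => |sin (z - c)|) p :=
  ((differentiableAt_id.sub_const c).sin).abs h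

-- Near `0`, `|t| = |sin (arcsin t)|` with `arcsin` smooth, so `|sin|` has the kink of `|·|`.
theorem not_differentiableAt_abs_sin_sub (c : ℝ) :
    ¬ DifferentiableAt ℝ (fun z => |sin (z - c)|) c := by
  rw [differentiableAt_comp_sub_const (f := fun z => |sin z|), sub_self]
  intro h
  have hcomp : DifferentiableAt ℝ (fun t => |sin (arcsin t)|) 0 :=
    (arcsin_zero ▸ h).comp 0 (differentiableAt_arcsin.2 ⟨by norm_num, by norm_num⟩)
  refine not_differentiableAt_abs_zero (hcomp.congr_of_eventuallyEq ?_)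
  filter_upwards [Icc_mem_nhds (by norm_num : (-1 : ℝ) < 0) one_pos] with t ht
  rw [sin_arcsin ht.1 ht.2]

theorem linearIndependent_abs_sin_sub {ι : Type*} [Fintype ι] {θ : ι → ℝ}
    (hθ : Pairwise fun i j => sin (θ i - θ j) ≠ 0) :
    LinearIndependent ℝ fun i z => |sin (z - θ i)| :=
  linearIndependent_of_not_differentiableAt θ
    (fun _ _ hij => differentiableAt_abs_sin_sub (hθ hij.symm))
    fun j => not_differentiableAt_abs_sin_sub (θ j)

theorem kS_sub (a b : ℝ) :
    kS (a - b) = (1 / π) * ∫ z in (0 : ℝ)..π, |sin (z - a)| * |sin (z - b)| := by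
  set G : ℝ → ℝ := fun z => |sin (z - a)| * |sin (z - b)|
  have hG : Periodic G π := (abs_sin_sub_periodic a).mul (abs_sin_sub_periodic b)
  unfold kS
  congr 1
  calc ∫ z in (0 : ℝ)..π, |sin (a - b + z) * sin z|
      = ∫ z in (0 : ℝ)..π, G (b - z) := by
        refine intervalIntegral.integral_congr fun z _ => ?_
        simp only [G, abs_mul, show b - z - a = -(a - b + z) by ring, show b - z - b = -z by ring,
          sin_neg, abs_neg]
    _ = ∫ z in b - π..b - 0, G z := intervalIntegral.integral_comp_sub_left G b
    _ = ∫ z in (0 : ℝ)..π, G z := by simpa using hG.intervalIntegral_add_eq (b - π) 0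

theorem pairwise_sin_sub_ne_zero (N : ℕ) :
    Pairwise fun i j : Fin N => sin (i * π / N - j * π / N) ≠ 0 := by
  intro i j hij
  have hN : (0 : ℝ) < N := Nat.cast_pos.2 i.pos
  have hlt : |(i : ℝ) - j| < N := by
    have hi : (i : ℝ) < N := Nat.cast_lt.2 i.isLt
    have hj : (j : ℝ) < N := Nat.cast_lt.2 j.isLt
    rw [abs_sub_lt_iff]
    constructor <;> linarith [(Nat.cast_nonneg i : (0 : ℝ) ≤ i), (Nat.cast_nonneg j : (0 : ℝ) ≤ j)]
  have harg : |(i - j : ℝ) * π / N| < π := by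
    rw [abs_div, abs_mul, abs_of_pos pi_pos, abs_of_pos hN, div_lt_iff₀ hN, mul_comm π]
    exact mul_lt_mul_of_pos_right hlt pi_pos
  rw [← sub_div, ← sub_mul, Ne, sin_eq_zero_iff_of_lt_of_lt (abs_lt.1 harg).1 (abs_lt.1 harg).2]
  simpa [pi_ne_zero, hN.ne', sub_eq_zero, Fin.val_inj] using hij

noncomputable def intervalGram {ι : Type*} (f : ι → ℝ → ℝ) (a b : ℝ) : Matrix ι ι ℝ :=
  Matrix.of fun i j => ∫ z in a..b, f i z * f j z

theorem dotProduct_intervalGram_mulVec {ι : Type*} [Fintype ι] {f : ι → ℝ → ℝ} {a b : ℝ}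
    (hf : ∀ i, ContinuousOn (f i) (uIcc a b)) (x : ι → ℝ) :
    x ⬝ᵥ (intervalGram f a b *ᵥ x) = ∫ z in a..b, (∑ i, x i * f i z) ^ 2 := by
  have hcont : ∀ i j, ContinuousOn (fun z => x i * x j * (f i z * f j z)) (uIcc a b) :=
    fun i j => continuousOn_const.mul ((hf i).mul (hf j))
  calc x ⬝ᵥ (intervalGram f a b *ᵥ x)
      = ∑ i, ∑ j, ∫ z in a..b, x i * x j * (f i z * f j z) := by
        refine Finset.sum_congr rfl fun i _ => ?_
        simp only [mulVec, dotProduct, Finset.mul_sum]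
        refine Finset.sum_congr rfl fun j _ => ?_
        rw [intervalGram, of_apply, intervalIntegral.integral_const_mul]
        ring
    _ = ∑ i, ∫ z in a..b, ∑ j, x i * x j * (f i z * f j z) :=
        Finset.sum_congr rfl fun i _ =>
          (intervalIntegral.integral_finsetSum fun j _ => (hcont i j).intervalIntegrable).symm
    _ = ∫ z in a..b, ∑ i, ∑ j, x i * x j * (f i z * f j z) :=
        (intervalIntegral.integral_finsetSum fun i _ =>
          (continuousOn_finsetSum _ fun j _ => hcont i j).intervalIntegrable).symm
    _ = ∫ z in a..b, (∑ i, x i * f i z) ^ 2 :=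
        intervalIntegral.integral_congr fun z _ => by
          simp only [sq, Finset.sum_mul_sum]
          exact Finset.sum_congr rfl fun i _ => Finset.sum_congr rfl fun j _ => by ring

theorem posDef_intervalGram {ι : Type*} [Fintype ι] {f : ι → ℝ → ℝ} {a b : ℝ} (hab : a < b)
    (hf : ∀ i, ContinuousOn (f i) (Icc a b))
    (hli : LinearIndependent ℝ fun i => (Icc a b).domRestrict (f i)) :
    (intervalGram f a b).PosDef := by
  refine Matrix.PosDef.of_dotProduct_mulVec_pos ?_ fun x hx => ?_
  · ext i j
    simp [intervalGram, mul_comm]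
  obtain ⟨z, hz⟩ : ∃ z : Icc a b, ∑ i, x i * f i z ≠ 0 := by
    by_contra! h
    exact hx (funext <| Fintype.linearIndependent_iff.1 hli x <| funext fun z => by simpa using h z)
  rw [star_trivial, dotProduct_intervalGram_mulVec (by rwa [uIcc_of_le hab.le])]
  exact intervalIntegral.integral_pos hab ((continuousOn_finsetSum _ fun i _ =>
    continuousOn_const.mul (hf i)).pow 2) (fun _ _ => sq_nonneg _) ⟨z, z.2, by positivity⟩

theorem matrixK_posDef_general (N : ℕ) :
    (Matrix.of fun i j : Fin N =>
      kS ((i : ℝ) * π / N - (j : ℝ) * π / N)).PosDef := by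
  set θ : Fin N → ℝ := fun i => i * π / N
  have hK : Matrix.of (fun i j => kS (θ i - θ j))
      = (1 / π) • intervalGram (fun i z => |sin (z - θ i)|) 0 π := by
    ext i j
    simp [intervalGram, kS_sub]
  have hli := linearIndependent_domRestrict_Icc_of_periodic pi_pos
    (fun i => abs_sin_sub_periodic (θ i))
    (linearIndependent_abs_sin_sub (pairwise_sin_sub_ne_zero N)) 0
  rw [zero_add] at hli
  exact hK ▸ (posDef_intervalGram pi_pos (fun i => by fun_prop) hli).smul (one_div_pos.2 pi_pos)

theorem matrixK_posDef (N : ℕ) (hN : 1 < N) :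
    (Matrix.of fun i j : Fin N =>
      kS ((i : ℝ) * π / N - (j : ℝ) * π / N)).PosDef :=
  matrixK_posDef_general N
end
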